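/- Let n ≥ 1 and let φ₁, φ₂ ∈ H^∞(𝔻^n) be inner functions depending on disjoint sets of variables, and set T = T_{φ₁}* T_{φ₂} on H²(𝔻^n). Then T T* = T_{φ₁}* T_{φ₁} T_{φ₂} T_{φ₂}* = the orthogonal projection of H²(𝔻^n) onto φ₂ H²(𝔻^n), and T* T = T_{φ₁} T_{φ₁}* = the orthogonal projection of H²(𝔻^n) onto φ₁ H²(𝔻^n). In particular, T is a partial isometry with final space φ₂ H²(𝔻^n) and initial space φ₁ H²(𝔻^n). -/

import Mathlib

noncomputable section

open MeasureTheory Complex Filter Topology ContinuousLinearMap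

/-- The `n`-torus `𝕋^n`, with its (normalized, since `T = 1`) Haar measure. -/
abbrev Torus (n : ℕ) : Type := Fin n → UnitAddCircle

/-- The Lebesgue space `L²(𝕋^n)`. -/
abbrev L2T (n : ℕ) : Type := Lp ℂ 2 (volume : Measure (Torus n))

/-- The character `z ↦ z^k` on the `n`-torus, `k ∈ ℤ^n`. -/
def charFn (n : ℕ) (k : Fin n → ℤ) : Torus n → ℂ := fun z => ∏ i, fourier (k i) (z i)

theorem charFn_continuous (n : ℕ) (k : Fin n → ℤ) : Continuous (charFn n k) :=
  continuous_finset_prod _ fun i _ => (map_continuous (fourier (k i))).comp (continuous_apply i)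

theorem charFn_norm (n : ℕ) (k : Fin n → ℤ) (z : Torus n) : ‖charFn n k z‖ = 1 := by
  rw [charFn, norm_prod]
  exact Finset.prod_eq_one fun i _ => Circle.norm_coe _

theorem charFn_memℒp (n : ℕ) (k : Fin n → ℤ) :
    MemLp (charFn n k) ⊤ (volume : Measure (Torus n)) :=
  memLp_top_of_bound (charFn_continuous n k).aestronglyMeasurable 1
    (Eventually.of_forall fun z => le_of_eq (charFn_norm n k z))

/-- The `k`-th Fourier coefficient `f̂(k) = ∫_{𝕋^n} (conj z^k) f(z) dm(z)`. -/
def mFourierCoeff {n : ℕ} (f : Torus n → ℂ) (k : Fin n → ℤ) : ℂ :=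
  ∫ z, (starRingEnd ℂ) (charFn n k z) * f z

theorem mFourierCoeff_congr {n : ℕ} {f g : Torus n → ℂ}
    (h : f =ᵐ[(volume : Measure (Torus n))] g) (k : Fin n → ℤ) :
    mFourierCoeff f k = mFourierCoeff g k :=
  integral_congr_ae (h.mono fun z hz => by simp only [hz])

theorem integrable_char_mul (n : ℕ) (k : Fin n → ℤ) (f : L2T n) :
    Integrable (fun z => (starRingEnd ℂ) (charFn n k z) * f z)
      (volume : Measure (Torus n)) := by
  have hf : Integrable (⇑f) (volume : Measure (Torus n)) := (Lp.memLp f).integrable one_le_two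
  refine hf.bdd_mul (c := 1) ?_ (Eventually.of_forall fun z => ?_)
  · exact (continuous_star.comp (charFn_continuous n k)).aestronglyMeasurable
  · rw [starRingEnd_apply, norm_star, charFn_norm]

theorem mFourierCoeff_add {n : ℕ} (k : Fin n → ℤ) (f g : L2T n) :
    mFourierCoeff (⇑(f + g)) k = mFourierCoeff (⇑f) k + mFourierCoeff (⇑g) k := by
  rw [mFourierCoeff_congr (Lp.coeFn_add f g) k]
  unfold mFourierCoeff
  simp only [Pi.add_apply, mul_add]
  exact integral_add (integrable_char_mul n k f) (integrable_char_mul n k g)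

theorem mFourierCoeff_smul {n : ℕ} (k : Fin n → ℤ) (c : ℂ) (f : L2T n) :
    mFourierCoeff (⇑(c • f)) k = c * mFourierCoeff (⇑f) k := by
  rw [mFourierCoeff_congr (Lp.coeFn_smul c f) k]
  unfold mFourierCoeff
  have : (fun z => (starRingEnd ℂ) (charFn n k z) * (c • ⇑f) z) =
      fun z => c • ((starRingEnd ℂ) (charFn n k z) * f z) := by
    funext z; simp only [Pi.smul_apply, smul_eq_mul]; ring
  rw [this, integral_smul, smul_eq_mul]

/-- All Fourier coefficients with some negative index vanish (membership in the "analytic"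
part, e.g. `H²(𝕋^n)` resp. `H^∞(𝔻^n)` for `L²` resp. `L^∞` functions). -/
def IsAnalyticSymbol {n : ℕ} (φ : Torus n → ℂ) : Prop :=
  ∀ k : Fin n → ℤ, (∃ i, k i < 0) → mFourierCoeff φ k = 0

/-- `φ ∈ H^∞(𝔻^n) = L^∞(𝕋^n) ∩ H²(𝕋^n)`. -/
def IsHinfty {n : ℕ} (φ : Torus n → ℂ) : Prop :=
  MemLp φ ⊤ (volume : Measure (Torus n)) ∧ IsAnalyticSymbol φ

/-- `φ` is an inner function in `H^∞(𝔻^n)`: it is in `H^∞` and unimodular a.e. on `𝕋^n`. -/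
def IsInnerFn {n : ℕ} (φ : Torus n → ℂ) : Prop :=
  IsHinfty φ ∧ ∀ᵐ z ∂(volume : Measure (Torus n)), ‖φ z‖ = 1

/-- `φ` depends only on the variables in `A`: `φ̂(k) = 0` whenever `k j ≠ 0` for some `j ∉ A`. -/
def DependsOnlyOn {n : ℕ} (φ : Torus n → ℂ) (A : Set (Fin n)) : Prop :=
  ∀ k : Fin n → ℤ, (∃ j, j ∉ A ∧ k j ≠ 0) → mFourierCoeff φ k = 0

/-- The Hardy space `H²(𝔻^n) ≅ H²(𝕋^n)` as a subspace of `L²(𝕋^n)`. -/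
def hardySpace (n : ℕ) : Submodule ℂ (L2T n) where
  carrier := {f : L2T n | ∀ k : Fin n → ℤ, (∃ i, k i < 0) → mFourierCoeff (⇑f) k = 0}
  add_mem' := by
    intro a b ha hb k hk
    rw [mFourierCoeff_add k a b, ha k hk, hb k hk, add_zero]
  zero_mem' := by
    intro k hk
    rw [mFourierCoeff_congr (Lp.coeFn_zero ℂ 2 (volume : Measure (Torus _))) k]
    simp [mFourierCoeff]
  smul_mem' := by
    intro c a ha k hk
    rw [mFourierCoeff_smul k c a, ha k hk, mul_zero]

/-- The character `z^k` as an element of `L²(𝕋^n)`. -/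
def charLp2 (n : ℕ) (k : Fin n → ℤ) : L2T n :=
  MemLp.toLp (charFn n k) ((charFn_memℒp n k).mono_exponent le_top)

theorem mFourierCoeff_eq_inner (n : ℕ) (k : Fin n → ℤ) (f : L2T n) :
    mFourierCoeff (⇑f) k = @inner ℂ _ _ (charLp2 n k) f := by
  rw [mFourierCoeff, MeasureTheory.L2.inner_def]
  apply integral_congr_ae
  have hcoe : ⇑(charLp2 n k) =ᵐ[(volume : Measure (Torus n))] charFn n k :=
    MemLp.coeFn_toLp _
  filter_upwards [hcoe] with z hz
  rw [RCLike.inner_apply, hz, mul_comm]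

theorem hardySpace_isClosed (n : ℕ) :
    IsClosed ((hardySpace n : Submodule ℂ (L2T n)) : Set (L2T n)) := by
  have h : ((hardySpace n : Submodule ℂ (L2T n)) : Set (L2T n)) =
      ⋂ k ∈ {k : Fin n → ℤ | ∃ i, k i < 0},
        {f : L2T n | @inner ℂ _ _ (charLp2 n k) f = 0} := by
    ext f
    simp only [Set.mem_iInter, Set.mem_setOf_eq, SetLike.mem_coe]
    constructor
    · intro hf k hk
      rw [← mFourierCoeff_eq_inner]; exact hf k hk
    · intro hf k hk
      rw [mFourierCoeff_eq_inner]; exact hf k hk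
  rw [h]
  exact isClosed_biInter fun k _ =>
    isClosed_eq (Continuous.inner continuous_const continuous_id) continuous_const

instance hardySpace_completeSpace (n : ℕ) : CompleteSpace (hardySpace n) :=
  (hardySpace_isClosed n).completeSpace_coe

/-- The Hardy space as a Hilbert space. -/
abbrev HardyH (n : ℕ) := ↥(hardySpace n)

/-- The representative function of an element of the Hardy space. -/
def repFn {n : ℕ} (f : HardyH n) : Torus n → ℂ := ⇑(f : L2T n)

theorem mul_memℒp {n : ℕ} {φ : Torus n → ℂ} (hφ : MemLp φ ⊤ (volume : Measure (Torus n)))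
    (f : L2T n) : MemLp (fun z => φ z * f z) 2 (volume : Measure (Torus n)) := by
  exact MemLp.mul' (Lp.memLp f) hφ

/-- Multiplication by `φ ∈ L^∞(𝕋^n)` as a map on `L²(𝕋^n)`. -/
def mulL2 {n : ℕ} (φ : Torus n → ℂ) (hφ : MemLp φ ⊤ (volume : Measure (Torus n)))
    (f : L2T n) : L2T n :=
  MemLp.toLp (fun z => φ z * f z) (mul_memℒp hφ f)

/-- `IsToeplitz φ hφ T` : `T` is the Toeplitz operator on `H²(𝔻^n)` with symbol
`φ ∈ L^∞(𝕋^n)`, i.e. `T f = P(φ f)` where `P` is the orthogonal projection onto `H²`. -/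
def IsToeplitz {n : ℕ} (φ : Torus n → ℂ) (hφ : MemLp φ ⊤ (volume : Measure (Torus n)))
    (T : HardyH n →L[ℂ] HardyH n) : Prop :=
  ∀ f : HardyH n, T f = Submodule.orthogonalProjectionOnto (hardySpace n) (mulL2 φ hφ (f : L2T n))

/-- `IsMulOp φ T` : `T` is the multiplication operator `M_φ` on `H²(𝔻^n)`. -/
def IsMulOp {n : ℕ} (φ : Torus n → ℂ) (T : HardyH n →L[ℂ] HardyH n) : Prop :=
  ∀ f : HardyH n, repFn (T f) =ᵐ[(volume : Measure (Torus n))] fun z => φ z * repFn f z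

/-- A bounded operator is a partial isometry if it is isometric on the orthogonal
complement of its kernel. -/
def IsPartialIsometryOp {E F : Type*} [NormedAddCommGroup E] [InnerProductSpace ℂ E]
    [NormedAddCommGroup F] [NormedSpace ℂ F] (T : E →L[ℂ] F) : Prop :=
  ∀ x ∈ (LinearMap.ker (T : E →ₗ[ℂ] F))ᗮ, ‖T x‖ = ‖x‖

/-- Hyponormality: `T*T - TT* ≥ 0`. -/
def IsHyponormal {H : Type*} [NormedAddCommGroup H] [InnerProductSpace ℂ H] [CompleteSpace H]
    (T : H →L[ℂ] H) : Prop :=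
  (ContinuousLinearMap.adjoint T ∘L T - T ∘L ContinuousLinearMap.adjoint T).IsPositive

/-- A shift: an isometry whose adjoint powers tend to `0` strongly. -/
def IsShiftOp {H : Type*} [NormedAddCommGroup H] [InnerProductSpace ℂ H] [CompleteSpace H]
    (V : H →L[ℂ] H) : Prop :=
  Isometry V ∧ ∀ x : H, Tendsto (fun m : ℕ => ((ContinuousLinearMap.adjoint V) ^ m) x) atTop (nhds 0)

/-- `g ∈ θ · H²(𝔻^n)`, i.e. `g = θ h` a.e. for some `h ∈ H²(𝔻^n)`. -/
def InMulRange {n : ℕ} (θ : Torus n → ℂ) (g : HardyH n) : Prop :=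
  ∃ h : HardyH n, repFn g =ᵐ[(volume : Measure (Torus n))] fun z => θ z * repFn h z

/-- `P` is the orthogonal projection of `H²(𝔻^n)` onto `θ H²(𝔻^n)`. -/
def IsOrthProjOntoMul {n : ℕ} (P : HardyH n →L[ℂ] HardyH n) (θ : Torus n → ℂ) : Prop :=
  IsIdempotentElem P ∧ IsSelfAdjoint P ∧
    ∀ g : HardyH n, g ∈ LinearMap.range (P : HardyH n →ₗ[ℂ] HardyH n) ↔ InMulRange θ g

/-!
For an analytic symbol the Toeplitz operator `T_φ` is multiplication by `φ`, so for inner `φ₁, φ₂`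
the operators `T₁ = T_{φ₁}`, `T₂ = T_{φ₂}` are commuting isometries. Because `φ₁` and `φ₂` depend on
disjoint sets of variables they even doubly commute, `T₂* T₁ = T₁ T₂*`: the Fourier indices of
`conj φ₂ · f` that the Riesz projection discards are negative only in the variables of `φ₂`, and
multiplication by `φ₁` does not move those coordinates. For doubly commuting isometries the
identities `T T* = T₁* T₁ T₂ T₂* = T₂ T₂*` and `T* T = T₁ T₁*` are pure algebra, and `V V*` is the
orthogonal projection onto `ran V = φ H²` for the isometry `V = T_φ`.
-/

open Set
open scoped InnerProductSpace Pointwise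

section Operators

theorem star_mul_mul_star_of_commute {R : Type*} [Monoid R] [StarMul R] {a b : R}
    (hab : Commute a b) (hba : Commute (star b) a) :
    star a * b * star (star a * b) = star a * a * (b * star b) := by
  rw [star_mul, star_star, mul_assoc, hba.eq, ← mul_assoc b, ← hab.eq]
  simp only [mul_assoc]

theorem star_star_mul_mul_of_commute {R : Type*} [Monoid R] [StarMul R] {a b : R}
    (hab : Commute a b) (hba : Commute (star b) a) :
    star (star a * b) * (star a * b) = star b * b * (a * star a) := by
  have hab' : Commute (star a) b := by simpa only [star_star] using hba.star_star.symm
  simpa only [star_mul, star_star] using star_mul_mul_star_of_commute hab.symm hab'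

theorem isIdempotentElem_mul_star_of_star_mul_self {R : Type*} [Monoid R] [Star R] {a : R}
    (ha : star a * a = 1) : IsIdempotentElem (a * star a) := by
  rw [IsIdempotentElem, mul_assoc, ← mul_assoc (star a), ha, one_mul]

theorem range_mul_star_of_star_mul_self {𝕜 E : Type*} [RCLike 𝕜] [NormedAddCommGroup E]
    [InnerProductSpace 𝕜 E] [CompleteSpace E] {T : E →L[𝕜] E} (hT : star T * T = 1) :
    LinearMap.range ((T * star T : E →L[𝕜] E) : E →ₗ[𝕜] E) = LinearMap.range (T : E →ₗ[𝕜] E) := by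
  refine le_antisymm (LinearMap.range_comp_le_range _ _) ?_
  rintro _ ⟨x, rfl⟩
  refine ⟨T x, ?_⟩
  show (T * star T * T) x = T x
  rw [mul_assoc, hT, mul_one]

theorem isPartialIsometryOp_of_isIdempotentElem {E F : Type*} [NormedAddCommGroup E]
    [InnerProductSpace ℂ E] [CompleteSpace E] [NormedAddCommGroup F] [InnerProductSpace ℂ F]
    [CompleteSpace F] {T : E →L[ℂ] F}
    (hT : IsIdempotentElem (adjoint T ∘L T)) : IsPartialIsometryOp T := by
  intro x hx
  set p := adjoint T ∘L T
  have hker : x - p x ∈ LinearMap.ker (T : E →ₗ[ℂ] F) := by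
    rw [← ker_adjoint_comp_self, LinearMap.mem_ker, coe_coe, map_sub, ← comp_apply, ← mul_def,
      hT.eq, sub_self]
  have hpx : ⟪p x, x⟫_ℂ = ⟪x, x⟫_ℂ := by
    have h := (Submodule.mem_orthogonal _ x).1 hx _ hker
    rw [inner_sub_left, sub_eq_zero] at h
    exact h.symm
  have hsq : ‖T x‖ ^ 2 = ‖x‖ ^ 2 := by
    rw [apply_norm_sq_eq_inner_adjoint_left]
    exact (congrArg RCLike.re hpx).trans (inner_self_eq_norm_sq x)
  exact (pow_left_inj₀ (norm_nonneg _) (norm_nonneg _) two_ne_zero).1 hsq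

end Operators

section Fourier

-- Mathlib's `mFourierBasis` lives on `L²` of the product of `haarAddCircle`, which is
-- `volume` only propositionally; generalising the measure lets us transport it by `subst`.
theorem UnitAddTorus.exists_hilbertBasis_mFourier {d : Type*} [Fintype d]
    {μ : Measure (UnitAddTorus d)} (hμ : μ = Measure.pi fun _ => AddCircle.haarAddCircle) :
    ∃ b : HilbertBasis (d → ℤ) ℂ (Lp ℂ 2 μ), ∀ k, b k =ᵐ[μ] UnitAddTorus.mFourier k := by
  subst hμ
  exact ⟨UnitAddTorus.mFourierBasis, fun k => by
    rw [UnitAddTorus.coe_mFourierBasis]; exact UnitAddTorus.coeFn_mFourierLp 2 k⟩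

variable {n : ℕ}

theorem volume_torus_eq_pi_haarAddCircle :
    (volume : Measure (Torus n)) = Measure.pi fun _ => AddCircle.haarAddCircle := by
  rw [volume_pi, AddCircle.volume_eq_smul_haarAddCircle, ENNReal.ofReal_one, one_smul]

theorem charFn_eq_mFourier (k : Fin n → ℤ) : charFn n k = UnitAddTorus.mFourier k := rfl

theorem exists_hilbertBasis_charLp2 (n : ℕ) :
    ∃ b : HilbertBasis (Fin n → ℤ) ℂ (L2T n), ⇑b = charLp2 n := by
  obtain ⟨b, hb⟩ := UnitAddTorus.exists_hilbertBasis_mFourier volume_torus_eq_pi_haarAddCircle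
  refine ⟨b, funext fun k => Lp.ext ?_⟩
  filter_upwards [hb k, MemLp.coeFn_toLp ((charFn_memℒp n k).mono_exponent le_top)] with z h1 h2
  rw [h1, charLp2, h2, charFn_eq_mFourier]

theorem mFourierCoeff_charLp2 (k l : Fin n → ℤ) :
    mFourierCoeff (charLp2 n l) k = if k = l then 1 else 0 := by
  obtain ⟨b, hb⟩ := exists_hilbertBasis_charLp2 n
  rw [mFourierCoeff_eq_inner, ← hb]
  exact orthonormal_iff_ite.mp b.orthonormal k l

theorem ext_mFourierCoeff {u v : L2T n} (h : ∀ k, mFourierCoeff u k = mFourierCoeff v k) :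
    u = v := by
  obtain ⟨b, hb⟩ := exists_hilbertBasis_charLp2 n
  refine b.repr.injective (lp.ext (funext fun k => ?_))
  simpa only [HilbertBasis.repr_apply_apply, hb, mFourierCoeff_eq_inner] using h k

theorem hasSum_conj_mFourierCoeff_mul (u v : L2T n) :
    HasSum (fun k => starRingEnd ℂ (mFourierCoeff u k) * mFourierCoeff v k) ⟪u, v⟫_ℂ := by
  obtain ⟨b, hb⟩ := exists_hilbertBasis_charLp2 n
  simpa only [hb, mFourierCoeff_eq_inner, inner_conj_symm] using b.hasSum_inner_mul_inner u v

theorem mFourierCoeff_star (φ : Torus n → ℂ) (k : Fin n → ℤ) :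
    mFourierCoeff (star φ) k = starRingEnd ℂ (mFourierCoeff φ (-k)) := by
  rw [mFourierCoeff, mFourierCoeff, ← integral_conj]
  congr 1 with z
  simp [charFn_eq_mFourier, UnitAddTorus.mFourier_neg]

end Fourier

section Multiplication

variable {n : ℕ} {φ ψ : Torus n → ℂ}

theorem mulL2_coeFn (hφ : MemLp φ ⊤ (volume : Measure (Torus n))) (f : L2T n) :
    mulL2 φ hφ f =ᵐ[volume] fun z => φ z * f z :=
  MemLp.coeFn_toLp _

theorem mulL2_sub (hφ : MemLp φ ⊤ (volume : Measure (Torus n))) (f g : L2T n) :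
    mulL2 φ hφ (f - g) = mulL2 φ hφ f - mulL2 φ hφ g := by
  refine Lp.ext ?_
  filter_upwards [mulL2_coeFn hφ (f - g), mulL2_coeFn hφ f, mulL2_coeFn hφ g,
    Lp.coeFn_sub f g, Lp.coeFn_sub (mulL2 φ hφ f) (mulL2 φ hφ g)] with z h h₁ h₂ h₃ h₄
  simp only [h, h₁, h₂, h₃, h₄, Pi.sub_apply, mul_sub]

theorem mulL2_comm (hφ : MemLp φ ⊤ (volume : Measure (Torus n)))
    (hψ : MemLp ψ ⊤ (volume : Measure (Torus n))) (f : L2T n) :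
    mulL2 φ hφ (mulL2 ψ hψ f) = mulL2 ψ hψ (mulL2 φ hφ f) := by
  refine Lp.ext ?_
  filter_upwards [mulL2_coeFn hφ (mulL2 ψ hψ f), mulL2_coeFn hψ (mulL2 φ hφ f),
    mulL2_coeFn hψ f, mulL2_coeFn hφ f] with z h₁ h₂ h₃ h₄
  rw [h₁, h₂, h₃, h₄, mul_left_comm]

theorem inner_mulL2_left (hφ : MemLp φ ⊤ (volume : Measure (Torus n))) (f g : L2T n) :
    ⟪mulL2 φ hφ f, g⟫_ℂ = ⟪f, mulL2 (star φ) hφ.star g⟫_ℂ := by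
  rw [L2.inner_def, L2.inner_def]
  refine integral_congr_ae ?_
  filter_upwards [mulL2_coeFn hφ f, mulL2_coeFn hφ.star g] with z h₁ h₂
  simp only [RCLike.inner_apply, h₁, h₂, Pi.star_apply, map_mul, RCLike.star_def]
  ring

theorem inner_mulL2_right (hφ : MemLp φ ⊤ (volume : Measure (Torus n))) (f g : L2T n) :
    ⟪f, mulL2 φ hφ g⟫_ℂ = ⟪mulL2 (star φ) hφ.star f, g⟫_ℂ := by
  rw [← inner_conj_symm, inner_mulL2_left, inner_conj_symm]

theorem inner_mulL2_mulL2_of_norm_eq_one (hφ : MemLp φ ⊤ (volume : Measure (Torus n)))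
    (hφ₁ : ∀ᵐ z ∂volume, ‖φ z‖ = 1) (f g : L2T n) :
    ⟪mulL2 φ hφ f, mulL2 φ hφ g⟫_ℂ = ⟪f, g⟫_ℂ := by
  rw [L2.inner_def, L2.inner_def]
  refine integral_congr_ae ?_
  filter_upwards [mulL2_coeFn hφ f, mulL2_coeFn hφ g, hφ₁] with z h₁ h₂ h₃
  have hconj : starRingEnd ℂ (φ z) * φ z = 1 := by
    rw [Complex.conj_mul', h₃, Complex.ofReal_one, one_pow]
  simp only [RCLike.inner_apply, h₁, h₂, map_mul]
  linear_combination (g z * starRingEnd ℂ (f z)) * hconj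

theorem mFourierCoeff_mulL2_charLp2 (hφ : MemLp φ ⊤ (volume : Measure (Torus n)))
    (k l : Fin n → ℤ) :
    mFourierCoeff (mulL2 φ hφ (charLp2 n l)) k = mFourierCoeff φ (k - l) := by
  rw [mFourierCoeff, mFourierCoeff]
  refine integral_congr_ae ?_
  filter_upwards [mulL2_coeFn hφ (charLp2 n l),
    MemLp.coeFn_toLp ((charFn_memℒp n l).mono_exponent le_top)] with z h₁ h₂
  rw [h₁, charLp2, h₂, sub_eq_add_neg]
  simp only [charFn_eq_mFourier, UnitAddTorus.mFourier_add, UnitAddTorus.mFourier_neg, map_mul,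
    Complex.conj_conj]
  ring

theorem hasSum_mFourierCoeff_mulL2 (hφ : MemLp φ ⊤ (volume : Measure (Torus n))) (f : L2T n)
    (k : Fin n → ℤ) :
    HasSum (fun l => mFourierCoeff φ (k - l) * mFourierCoeff f l)
      (mFourierCoeff (mulL2 φ hφ f) k) := by
  rw [mFourierCoeff_eq_inner, inner_mulL2_right]
  simpa only [mFourierCoeff_mulL2_charLp2, mFourierCoeff_star, neg_sub, Complex.conj_conj]
    using hasSum_conj_mFourierCoeff_mul (mulL2 (star φ) hφ.star (charLp2 n k)) f

end Multiplication

section FourierSupport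

variable {n : ℕ}

def FourierSupportedIn (f : Torus n → ℂ) (S : Set (Fin n → ℤ)) : Prop :=
  ∀ k ∉ S, mFourierCoeff f k = 0

theorem FourierSupportedIn.mono {f : Torus n → ℂ} {S S' : Set (Fin n → ℤ)}
    (hf : FourierSupportedIn f S) (hS : S ⊆ S') : FourierSupportedIn f S' :=
  fun k hk => hf k fun h => hk (hS h)

theorem FourierSupportedIn.star {f : Torus n → ℂ} {S : Set (Fin n → ℤ)}
    (hf : FourierSupportedIn f S) : FourierSupportedIn (star f) (-S) := by
  intro k hk
  rw [mFourierCoeff_star, hf (-k) hk, map_zero]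

theorem FourierSupportedIn.mulL2 {φ : Torus n → ℂ} {f : L2T n} {S U : Set (Fin n → ℤ)}
    (hφ : MemLp φ ⊤ (volume : Measure (Torus n))) (hφS : FourierSupportedIn φ S)
    (hfU : FourierSupportedIn f U) : FourierSupportedIn (mulL2 φ hφ f) (S + U) := by
  intro k hk
  refine (hasSum_mFourierCoeff_mulL2 hφ f k).unique ?_
  convert hasSum_zero with l
  by_cases hl : l ∈ U
  · rw [hφS (k - l) fun h => hk ⟨k - l, h, l, hl, sub_add_cancel k l⟩, zero_mul]
  · rw [hfU l hl, mul_zero]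

theorem notMem_Ici_zero_iff {k : Fin n → ℤ} : k ∉ Ici 0 ↔ ∃ i, k i < 0 := by
  simp only [mem_Ici, Pi.le_def, Pi.zero_apply, not_forall, not_le]

theorem isAnalyticSymbol_iff {φ : Torus n → ℂ} :
    IsAnalyticSymbol φ ↔ FourierSupportedIn φ (Ici 0) := by
  simp only [IsAnalyticSymbol, FourierSupportedIn, notMem_Ici_zero_iff]

theorem mem_hardySpace_iff {f : L2T n} : f ∈ hardySpace n ↔ FourierSupportedIn f (Ici 0) :=
  isAnalyticSymbol_iff

theorem dependsOnlyOn_iff {φ : Torus n → ℂ} {A : Set (Fin n)} :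
    DependsOnlyOn φ A ↔ FourierSupportedIn φ {k | ∀ j ∉ A, k j = 0} := by
  simp only [DependsOnlyOn, FourierSupportedIn, mem_ofPred_eq, not_forall, exists_prop]

end FourierSupport

section HardySpace

variable {n : ℕ}

local notation "P" => Submodule.orthogonalProjectionOnto (hardySpace n)

theorem mFourierCoeff_zero (k : Fin n → ℤ) : mFourierCoeff ((0 : L2T n) : Torus n → ℂ) k = 0 := by
  rw [mFourierCoeff_eq_inner, inner_zero_right]

theorem mFourierCoeff_sub (f g : L2T n) (k : Fin n → ℤ) :
    mFourierCoeff (f - g : L2T n) k = mFourierCoeff f k - mFourierCoeff g k := by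
  simp only [mFourierCoeff_eq_inner, inner_sub_right]

theorem charLp2_mem_hardySpace {k : Fin n → ℤ} (hk : 0 ≤ k) : charLp2 n k ∈ hardySpace n :=
  mem_hardySpace_iff.2 fun l hl => by
    rw [mFourierCoeff_charLp2, if_neg (ne_of_mem_of_not_mem hk hl).symm]

theorem mFourierCoeff_orthogonalProjection (f : L2T n) :
    mFourierCoeff (P f : L2T n) = (Ici 0).indicator (mFourierCoeff f) := by
  ext k
  by_cases hk : k ∈ Ici 0
  · rw [indicator_of_mem hk, mFourierCoeff_eq_inner, mFourierCoeff_eq_inner]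
    exact Submodule.inner_orthogonalProjectionOnto_eq_of_mem_left
      ⟨charLp2 n k, charLp2_mem_hardySpace hk⟩ f
  · rw [indicator_of_notMem hk]
    exact mem_hardySpace_iff.1 (P f).2 k hk

theorem orthogonalProjection_eq_zero_of_fourierSupportedIn {f : L2T n}
    (hf : FourierSupportedIn f (Ici 0)ᶜ) : P f = 0 := by
  refine Subtype.ext (ext_mFourierCoeff fun k => ?_)
  rw [mFourierCoeff_orthogonalProjection, Submodule.coe_zero, mFourierCoeff_zero]
  exact indicator_apply_eq_zero.2 fun hk => hf k (not_not_intro hk)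

theorem mulL2_mem_hardySpace {φ : Torus n → ℂ} (hφ : MemLp φ ⊤ (volume : Measure (Torus n)))
    (hφa : IsAnalyticSymbol φ) {f : L2T n} (hf : f ∈ hardySpace n) :
    mulL2 φ hφ f ∈ hardySpace n := by
  refine mem_hardySpace_iff.2 ((FourierSupportedIn.mulL2 hφ (isAnalyticSymbol_iff.1 hφa)
    (mem_hardySpace_iff.1 hf)).mono ?_)
  rintro _ ⟨a, ha, b, hb, rfl⟩
  exact add_nonneg (α := Fin n → ℤ) ha hb

-- Every Fourier index of `v - P v` has a negative entry in `B`, where `φ` does not shift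
-- indices, so `φ (v - P v)` is still orthogonal to `H²`.
theorem coe_orthogonalProjection_mulL2 {φ : Torus n → ℂ}
    (hφ : MemLp φ ⊤ (volume : Measure (Torus n))) (hφa : IsAnalyticSymbol φ)
    {A B : Set (Fin n)} (hAB : Disjoint A B) (hφA : DependsOnlyOn φ A) {v : L2T n}
    (hv : FourierSupportedIn v {l | ∀ i ∉ B, 0 ≤ l i}) :
    (P (mulL2 φ hφ v) : L2T n) = mulL2 φ hφ (P v) := by
  have hw : FourierSupportedIn (v - P v : L2T n) ({l | ∀ i ∉ B, 0 ≤ l i} ∩ (Ici 0)ᶜ) := by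
    intro k hk
    rw [mFourierCoeff_sub, mFourierCoeff_orthogonalProjection]
    by_cases hk0 : k ∈ Ici 0
    · rw [indicator_of_mem hk0, sub_self]
    · rw [indicator_of_notMem hk0, hv k fun hkB => hk ⟨hkB, hk0⟩, sub_zero]
  have hφw : FourierSupportedIn (mulL2 φ hφ (v - P v)) (Ici 0)ᶜ := by
    refine ((dependsOnlyOn_iff.1 hφA).mulL2 hφ hw).mono ?_
    rintro _ ⟨a, ha, l, ⟨hlB, hl⟩, rfl⟩
    obtain ⟨i, hi⟩ := notMem_Ici_zero_iff.1 hl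
    have hiB : i ∈ B := by_contra fun hiB => (hlB i hiB).not_gt hi
    refine notMem_Ici_zero_iff.2 ⟨i, ?_⟩
    show a i + l i < 0
    rw [ha i (hAB.notMem_of_mem_right hiB), zero_add]
    exact hi
  have hPv : mulL2 φ hφ (P v) ∈ hardySpace n := mulL2_mem_hardySpace hφ hφa (P v).2
  have h0 := orthogonalProjection_eq_zero_of_fourierSupportedIn hφw
  rw [mulL2_sub, map_sub, sub_eq_zero] at h0
  rw [h0, Submodule.orthogonalProjectionOnto_mem_subspace_eq_self ⟨_, hPv⟩]

end HardySpace

section Toeplitz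

variable {n : ℕ} {φ φ₁ φ₂ : Torus n → ℂ} {hφ : MemLp φ ⊤ (volume : Measure (Torus n))}
  {hφ₁ : MemLp φ₁ ⊤ (volume : Measure (Torus n))} {hφ₂ : MemLp φ₂ ⊤ (volume : Measure (Torus n))}
  {T T₁ T₂ : HardyH n →L[ℂ] HardyH n}

local notation "P" => Submodule.orthogonalProjectionOnto (hardySpace n)

theorem IsToeplitz.coe_apply (hT : IsToeplitz φ hφ T) (hφa : IsAnalyticSymbol φ)
    (f : HardyH n) : (T f : L2T n) = mulL2 φ hφ f := by
  rw [hT f, Submodule.orthogonalProjectionOnto_mem_subspace_eq_self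
    ⟨_, mulL2_mem_hardySpace hφ hφa f.2⟩]

theorem IsToeplitz.adjoint_apply (hT : IsToeplitz φ hφ T) (g : HardyH n) :
    adjoint T g = P (mulL2 (star φ) hφ.star g) := by
  refine ext_inner_left ℂ fun f => ?_
  rw [adjoint_inner_right, hT f, Submodule.inner_orthogonalProjectionOnto_eq_of_mem_right,
    inner_mulL2_left, Submodule.inner_orthogonalProjectionOnto_eq_of_mem_left]

theorem IsToeplitz.star_mul_self (hT : IsToeplitz φ hφ T) (hφi : IsInnerFn φ) :
    star T * T = 1 := by
  ext1 f
  refine ext_inner_left ℂ fun g => ?_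
  rw [star_eq_adjoint, mul_apply_eq_comp, adjoint_inner_right, Submodule.coe_inner,
    Submodule.coe_inner, hT.coe_apply hφi.1.2, hT.coe_apply hφi.1.2,
    inner_mulL2_mulL2_of_norm_eq_one hφ hφi.2]
  rfl

theorem IsToeplitz.commute (hT₁ : IsToeplitz φ₁ hφ₁ T₁) (hT₂ : IsToeplitz φ₂ hφ₂ T₂)
    (hφ₁a : IsAnalyticSymbol φ₁) (hφ₂a : IsAnalyticSymbol φ₂) : Commute T₁ T₂ := by
  ext1 f
  refine Subtype.ext ?_
  rw [mul_apply_eq_comp, mul_apply_eq_comp, hT₁.coe_apply hφ₁a,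
    hT₂.coe_apply hφ₂a, hT₂.coe_apply hφ₂a, hT₁.coe_apply hφ₁a, mulL2_comm]

theorem IsToeplitz.star_commute (hT₁ : IsToeplitz φ₁ hφ₁ T₁) (hT₂ : IsToeplitz φ₂ hφ₂ T₂)
    (hφ₁a : IsAnalyticSymbol φ₁) {A B : Set (Fin n)} (hAB : Disjoint A B)
    (hA : DependsOnlyOn φ₁ A) (hB : DependsOnlyOn φ₂ B) : Commute (star T₂) T₁ := by
  ext1 f
  have hv : FourierSupportedIn (mulL2 (star φ₂) hφ₂.star f) {l | ∀ i ∉ B, 0 ≤ l i} := by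
    refine ((dependsOnlyOn_iff.1 hB).star.mulL2 hφ₂.star (mem_hardySpace_iff.1 f.2)).mono ?_
    rintro _ ⟨a, ha, c, hc, rfl⟩ i hi
    show 0 ≤ a i + c i
    rw [neg_eq_zero.1 (ha i hi), zero_add]
    exact hc i
  refine Subtype.ext ?_
  rw [mul_apply_eq_comp, mul_apply_eq_comp, star_eq_adjoint,
    hT₂.adjoint_apply, hT₂.adjoint_apply, hT₁.coe_apply hφ₁a, hT₁.coe_apply hφ₁a, mulL2_comm,
    coe_orthogonalProjection_mulL2 hφ₁ hφ₁a hAB hA hv]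

theorem IsToeplitz.mem_range_iff (hT : IsToeplitz φ hφ T) (hφa : IsAnalyticSymbol φ)
    (g : HardyH n) : g ∈ LinearMap.range (T : HardyH n →ₗ[ℂ] HardyH n) ↔ InMulRange φ g := by
  constructor
  · rintro ⟨f, rfl⟩
    refine ⟨f, ?_⟩
    rw [repFn, coe_coe, hT.coe_apply hφa]
    exact mulL2_coeFn hφ f
  · rintro ⟨f, hf⟩
    refine ⟨f, Subtype.ext (Lp.ext ?_)⟩
    rw [coe_coe, hT.coe_apply hφa]
    exact (mulL2_coeFn hφ f).trans hf.symm

theorem IsToeplitz.isOrthProjOntoMul (hT : IsToeplitz φ hφ T) (hφi : IsInnerFn φ) :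
    IsOrthProjOntoMul (T ∘L adjoint T) φ := by
  have hiso := hT.star_mul_self hφi
  rw [← star_eq_adjoint, ← mul_def]
  refine ⟨isIdempotentElem_mul_star_of_star_mul_self hiso, .mul_star_self T, fun g => ?_⟩
  rw [range_mul_star_of_star_mul_self hiso]
  exact hT.mem_range_iff hφi.1.2 g

end Toeplitz

theorem stmt10_general (n : ℕ) (φ₁ φ₂ : Torus n → ℂ)
    (h₁ : IsInnerFn φ₁) (h₂ : IsInnerFn φ₂)
    (A B : Set (Fin n)) (hAB : Disjoint A B)
    (hA : DependsOnlyOn φ₁ A) (hB : DependsOnlyOn φ₂ B)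
    (T₁ T₂ : HardyH n →L[ℂ] HardyH n)
    (hT₁ : IsToeplitz φ₁ h₁.1.1 T₁) (hT₂ : IsToeplitz φ₂ h₂.1.1 T₂)
    (T : HardyH n →L[ℂ] HardyH n)
    (hTdef : T = ContinuousLinearMap.adjoint T₁ ∘L T₂) :
    T ∘L ContinuousLinearMap.adjoint T =
        (ContinuousLinearMap.adjoint T₁ ∘L T₁) ∘L (T₂ ∘L ContinuousLinearMap.adjoint T₂) ∧
    IsOrthProjOntoMul (T ∘L ContinuousLinearMap.adjoint T) φ₂ ∧
    ContinuousLinearMap.adjoint T ∘L T = T₁ ∘L ContinuousLinearMap.adjoint T₁ ∧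
    IsOrthProjOntoMul (ContinuousLinearMap.adjoint T ∘L T) φ₁ ∧
    IsPartialIsometryOp T := by
  have iso₁ : star T₁ * T₁ = 1 := hT₁.star_mul_self h₁
  have iso₂ : star T₂ * T₂ = 1 := hT₂.star_mul_self h₂
  have comm : Commute T₁ T₂ := hT₁.commute hT₂ h₁.1.2 h₂.1.2
  have star_comm : Commute (star T₂) T₁ := hT₁.star_commute hT₂ h₁.1.2 hAB hA hB
  have hTT : T ∘L adjoint T = (adjoint T₁ ∘L T₁) ∘L (T₂ ∘L adjoint T₂) := by
    simpa only [hTdef, star_eq_adjoint, mul_def] using star_mul_mul_star_of_commute comm star_comm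
  have hTT' : adjoint T ∘L T = T₁ ∘L adjoint T₁ := by
    have h := star_star_mul_mul_of_commute comm star_comm
    rw [iso₂, one_mul] at h
    simpa only [hTdef, star_eq_adjoint, mul_def] using h
  have hTT₂ : T ∘L adjoint T = T₂ ∘L adjoint T₂ := by
    rw [hTT, ← star_eq_adjoint T₁, ← mul_def (star T₁), iso₁, one_def, id_comp]
  refine ⟨hTT, hTT₂ ▸ hT₂.isOrthProjOntoMul h₂, hTT', hTT' ▸ hT₁.isOrthProjOntoMul h₁,
    isPartialIsometryOp_of_isIdempotentElem ?_⟩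
  rw [hTT', ← star_eq_adjoint, ← mul_def]
  exact isIdempotentElem_mul_star_of_star_mul_self iso₁

/-- equation (3.4). For inner functions `φ₁, φ₂ ∈ H^∞(𝔻^n)` depending on
disjoint sets of variables, `T = T_{φ₁}* T_{φ₂}` satisfies
`T T* = (T_{φ₁}* T_{φ₁})(T_{φ₂} T_{φ₂}*) = P_{φ₂ H²}` and `T* T = T_{φ₁} T_{φ₁}* = P_{φ₁ H²}`;
in particular `T` is a partial isometry with final space `φ₂ H²(𝔻^n)` and initial space
`φ₁ H²(𝔻^n)`. -/
theorem stmt10 (n : ℕ) (hn : 1 ≤ n) (φ₁ φ₂ : Torus n → ℂ)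
    (h₁ : IsInnerFn φ₁) (h₂ : IsInnerFn φ₂)
    (A B : Set (Fin n)) (hAB : Disjoint A B)
    (hA : DependsOnlyOn φ₁ A) (hB : DependsOnlyOn φ₂ B)
    (T₁ T₂ : HardyH n →L[ℂ] HardyH n)
    (hT₁ : IsToeplitz φ₁ h₁.1.1 T₁) (hT₂ : IsToeplitz φ₂ h₂.1.1 T₂)
    (T : HardyH n →L[ℂ] HardyH n)
    (hTdef : T = ContinuousLinearMap.adjoint T₁ ∘L T₂) :
    T ∘L ContinuousLinearMap.adjoint T =
        (ContinuousLinearMap.adjoint T₁ ∘L T₁) ∘L (T₂ ∘L ContinuousLinearMap.adjoint T₂) ∧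
    IsOrthProjOntoMul (T ∘L ContinuousLinearMap.adjoint T) φ₂ ∧
    ContinuousLinearMap.adjoint T ∘L T = T₁ ∘L ContinuousLinearMap.adjoint T₁ ∧
    IsOrthProjOntoMul (ContinuousLinearMap.adjoint T ∘L T) φ₁ ∧
    IsPartialIsometryOp T :=
  stmt10_general n φ₁ φ₂ h₁ h₂ A B hAB hA hB T₁ T₂ hT₁ hT₂ T hTdef
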